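/- Let (C, C') be an equitable 2-partition of the binary hypercube Q_n with quotient matrix [[a,b],[c,d]] (so a+b = c+d = n). Then C is a simple orthogonal array OA(|C|, n, 2, t) with t = (b+c)/2 - 1, provided (b+c)/2 - 1 ≥ 0: that is, for every set of t coordinate positions and every binary assignment on those positions, exactly |C|/2^t elements of C agree with the assignment. -/
import Mathlib

open Finset

namespace Stmt1Aux

variable {n : ℕ}

/-- Character: product of signs over a set of coordinates. -/
def W (S : Finset (Fin n)) (x : Fin n → Fin 2) : ℤ := ∏ i ∈ S, (-1 : ℤ) ^ (x i : ℕ)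

/-- Flip one coordinate. -/
def flp (i : Fin n) (x : Fin n → Fin 2) : Fin n → Fin 2 := Function.update x i (x i + 1)

lemma fin2_add_one_ne : ∀ v : Fin 2, v ≠ v + 1 := by decide

lemma fin2_ne_imp : ∀ u v : Fin 2, u ≠ v → v = u + 1 := by decide

lemma fin2_add_one_add_one : ∀ v : Fin 2, v + 1 + 1 = v := by decide

lemma sign_add_one (v : Fin 2) : ((-1 : ℤ)) ^ (((v + 1 : Fin 2)) : ℕ) = -(-1) ^ (v : ℕ) := by
  fin_cases v <;> decide

lemma flp_apply_self (i : Fin n) (x : Fin n → Fin 2) : flp i x i = x i + 1 := by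
  simp [flp]

lemma flp_apply_ne (i j : Fin n) (x : Fin n → Fin 2) (h : j ≠ i) : flp i x j = x j := by
  simp [flp, Function.update_of_ne h]

lemma flp_involutive (i : Fin n) : Function.Involutive (flp i) := by
  intro x
  funext j
  by_cases h : j = i
  · subst h
    rw [flp_apply_self, flp_apply_self, fin2_add_one_add_one]
  · rw [flp_apply_ne _ _ _ h, flp_apply_ne _ _ _ h]

lemma W_flp (S : Finset (Fin n)) (i : Fin n) (x : Fin n → Fin 2) :
    W S (flp i x) = (if i ∈ S then (-1 : ℤ) else 1) * W S x := by
  by_cases hi : i ∈ S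
  · rw [if_pos hi]
    unfold W
    rw [← Finset.mul_prod_erase S _ hi, ← Finset.mul_prod_erase S (fun j => (-1:ℤ)^(x j : ℕ)) hi]
    rw [flp_apply_self, sign_add_one]
    rw [Finset.prod_congr rfl (fun j hj => by
      rw [flp_apply_ne i j x (Finset.ne_of_mem_erase hj)])]
    ring
  · rw [if_neg hi, one_mul]
    unfold W
    exact Finset.prod_congr rfl fun j hj => by
      rw [flp_apply_ne i j x (fun h => hi (h ▸ hj))]

lemma hammingDist_flp (i : Fin n) (x : Fin n → Fin 2) : hammingDist x (flp i x) = 1 := by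
  unfold hammingDist
  have : ({j | x j ≠ flp i x j} : Finset (Fin n)) = {i} := by
    ext j
    simp only [Finset.mem_filter, Finset.mem_univ, true_and, Finset.mem_singleton]
    constructor
    · intro hj
      by_contra h
      exact hj (flp_apply_ne i j x h).symm
    · rintro rfl
      rw [flp_apply_self]
      exact fin2_add_one_ne _
  rw [this, Finset.card_singleton]

lemma exists_flp {x w : Fin n → Fin 2} (h : hammingDist x w = 1) : ∃ i, w = flp i x := by
  unfold hammingDist at h
  obtain ⟨i, hi⟩ := Finset.card_eq_one.mp h
  refine ⟨i, funext fun j => ?_⟩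
  by_cases hj : j = i
  · subst hj
    rw [flp_apply_self]
    have : j ∈ ({j_1 | x j_1 ≠ w j_1} : Finset (Fin n)) := by rw [hi]; exact Finset.mem_singleton_self _
    simp only [Finset.mem_filter] at this
    exact fin2_ne_imp _ _ this.2
  · rw [flp_apply_ne i j x hj]
    by_contra hne
    have : j ∈ ({j_1 | x j_1 ≠ w j_1} : Finset (Fin n)) := by
      simp only [Finset.mem_filter, Finset.mem_univ, true_and]
      exact fun hh => hne hh.symm
    rw [hi, Finset.mem_singleton] at this
    exact hj this

lemma sum_neighbors (x : Fin n → Fin 2) (F : (Fin n → Fin 2) → ℤ) :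
    ∑ w ∈ Finset.univ.filter (fun w => hammingDist x w = 1), F w
      = ∑ i : Fin n, F (flp i x) := by
  refine (Finset.sum_bij (fun i _ => flp i x) ?_ ?_ ?_ ?_).symm
  · intro i _
    simp [hammingDist_flp]
  · intro i _ i' _ hii'
    by_contra hne
    have hii2 : flp i x = flp i' x := hii'
    have h1 : flp i x i = x i + 1 := flp_apply_self i x
    have h2 : flp i' x i = x i := flp_apply_ne i' i x hne
    rw [hii2, h2] at h1
    exact fin2_add_one_ne (x i) h1
  · intro w hw
    simp only [Finset.mem_filter, Finset.mem_univ, true_and] at hw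
    obtain ⟨i, hi⟩ := exists_flp hw
    exact ⟨i, Finset.mem_univ i, hi.symm⟩
  · intros; rfl

lemma neighbor_char_sum (S : Finset (Fin n)) (x : Fin n → Fin 2) :
    ∑ w ∈ Finset.univ.filter (fun w => hammingDist x w = 1), W S w
      = ((n : ℤ) - 2 * S.card) * W S x := by
  rw [sum_neighbors]
  have : ∀ i : Fin n, W S (flp i x) = (if i ∈ S then (-1:ℤ) else 1) * W S x := fun i => W_flp S i x
  rw [Finset.sum_congr rfl fun i _ => this i, ← Finset.sum_mul]
  congr 1
  have : ∀ i : Fin n, (if i ∈ S then (-1:ℤ) else 1) = (if i ∈ S then (-2:ℤ) else 0) + 1 := by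
    intro i; by_cases h : i ∈ S <;> simp [h]
  rw [Finset.sum_congr rfl fun i _ => this i, Finset.sum_add_distrib, Finset.sum_const,
    Finset.sum_ite_mem, Finset.univ_inter, Finset.sum_const]
  simp
  ring

lemma total_char_sum (S : Finset (Fin n)) (hS : S.Nonempty) :
    ∑ x : Fin n → Fin 2, W S x = 0 := by
  obtain ⟨i, hi⟩ := hS
  have h1 : ∑ x : Fin n → Fin 2, W S x = ∑ x : Fin n → Fin 2, W S (flp i x) :=
    (Fintype.sum_bijective (flp i) (flp_involutive i).bijective _ _ fun x => rfl).symm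
  have h2 : ∀ x, W S (flp i x) = - W S x := by
    intro x; rw [W_flp, if_pos hi]; ring
  rw [Finset.sum_congr rfl fun x _ => h2 x, Finset.sum_neg_distrib] at h1
  linarith

end Stmt1Aux

open Stmt1Aux Finset in
/-- A cell of an equitable 2-partition of Q_n with quotient matrix [[a,b],[c,d]]
(a+b=c+d=n) is an orthogonal array OA(|C|,n,2,t) with t=(b+c)/2-1 (here b+c=2(t+1)). -/
theorem stmt_1 (n a b c d t : ℕ) (C : Finset (Fin n → Fin 2))
    (hab : a + b = n) (hcd : c + d = n)
    (hbc : b + c = 2 * (t + 1))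
    (hC : ∀ v ∈ C, (C.filter (fun w => hammingDist v w = 1)).card = a ∧
                   (Cᶜ.filter (fun w => hammingDist v w = 1)).card = b)
    (hCc : ∀ v ∈ Cᶜ, (C.filter (fun w => hammingDist v w = 1)).card = c ∧
                   (Cᶜ.filter (fun w => hammingDist v w = 1)).card = d) :
    ∀ s : Finset (Fin n), s.card = t → ∀ f : Fin n → Fin 2,
      (C.filter (fun x => ∀ i ∈ s, x i = f i)).card * 2 ^ t = C.card := by
  -- Key: Fourier coefficients of C vanish for nonempty S with |S| ≤ t
  have key : ∀ S : Finset (Fin n), S.Nonempty → S.card ≤ t → ∑ x ∈ C, W S x = 0 := by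
    intro S hSne hScard
    set cb : ℤ := ∑ x ∈ C, W S x with hcb
    have hcompl : ∑ x ∈ Cᶜ, W S x = -cb := by
      have := Finset.sum_add_sum_compl C (W S)
      rw [total_char_sum S hSne] at this
      linarith
    -- double count
    have hE1 : ∑ x ∈ C, ∑ w ∈ Finset.univ.filter (fun w => hammingDist x w = 1), W S w
        = ((n : ℤ) - 2 * S.card) * cb := by
      rw [Finset.sum_congr rfl fun x _ => neighbor_char_sum S x, ← Finset.mul_sum]
    have hsplit : ∀ x : Fin n → Fin 2,
        ∑ w ∈ Finset.univ.filter (fun w => hammingDist x w = 1), W S w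
        = (∑ w ∈ C, if hammingDist x w = 1 then W S w else 0)
          + ∑ w ∈ Cᶜ, if hammingDist x w = 1 then W S w else 0 := by
      intro x
      rw [Finset.sum_filter, Finset.sum_add_sum_compl]
    have hinner : ∀ w : Fin n → Fin 2,
        (∑ x ∈ C, if hammingDist x w = 1 then W S w else 0)
        = ((C.filter (fun z => hammingDist w z = 1)).card : ℤ) * W S w := by
      intro w
      rw [← Finset.sum_filter, Finset.sum_const, nsmul_eq_mul]
      have hset : C.filter (fun a => hammingDist a w = 1)
          = C.filter (fun z => hammingDist w z = 1) :=
        Finset.filter_congr (fun x _ => by rw [hammingDist_comm])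
      rw [hset]
    have hE2 : ∑ x ∈ C, ∑ w ∈ Finset.univ.filter (fun w => hammingDist x w = 1), W S w
        = (a : ℤ) * cb + (c : ℤ) * (-cb) := by
      rw [Finset.sum_congr rfl fun x _ => hsplit x, Finset.sum_add_distrib,
        Finset.sum_comm, Finset.sum_comm (s := C) (t := Cᶜ)]
      congr 1
      · rw [Finset.sum_congr rfl fun w _ => hinner w]
        have : ∀ w ∈ C, ((C.filter (fun z => hammingDist w z = 1)).card : ℤ) * W S w
            = (a : ℤ) * W S w := by
          intro w hw; rw [(hC w hw).1]
        rw [Finset.sum_congr rfl this, ← Finset.mul_sum]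
      · rw [Finset.sum_congr rfl fun w _ => hinner w]
        have : ∀ w ∈ Cᶜ, ((C.filter (fun z => hammingDist w z = 1)).card : ℤ) * W S w
            = (c : ℤ) * W S w := by
          intro w hw; rw [(hCc w hw).1]
        rw [Finset.sum_congr rfl this, ← Finset.mul_sum, hcompl]
    have heq : ((n : ℤ) - 2 * S.card - (a : ℤ) + (c : ℤ)) * cb = 0 := by
      rw [hE1] at hE2; linarith [hE2]
    have hcoef : ((n : ℤ) - 2 * S.card - (a : ℤ) + (c : ℤ)) ≠ 0 := by
      have h1 : (n : ℤ) = (a : ℤ) + b := by exact_mod_cast hab.symm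
      have h2 : (b : ℤ) + c = 2 * ((t : ℤ) + 1) := by exact_mod_cast hbc
      have h3 : (S.card : ℤ) ≤ t := by exact_mod_cast hScard
      intro h; rw [h1] at h; linarith
    exact (mul_eq_zero.mp heq).resolve_left hcoef
  intro s hs f
  -- the expansion identity
  have fac : ∀ u v : Fin 2, ((-1:ℤ))^(u:ℕ) * (-1)^(v:ℕ) + 1 = if u = v then 2 else 0 := by
    decide
  have claimA : ∀ x : Fin n → Fin 2,
      (∏ i ∈ s, ((-1:ℤ)^(x i : ℕ) * (-1)^(f i : ℕ) + 1))
      = if (∀ i ∈ s, x i = f i) then (2:ℤ)^t else 0 := by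
    intro x
    rw [Finset.prod_congr rfl fun i _ => fac (x i) (f i)]
    by_cases hall : ∀ i ∈ s, x i = f i
    · rw [if_pos hall, Finset.prod_congr rfl fun i hi => if_pos (hall i hi),
        Finset.prod_const, hs]
    · rw [if_neg hall]
      push_neg at hall
      obtain ⟨i, hi, hne⟩ := hall
      exact Finset.prod_eq_zero hi (if_neg hne)
  have claimB : ∀ x : Fin n → Fin 2,
      (∏ i ∈ s, ((-1:ℤ)^(x i : ℕ) * (-1)^(f i : ℕ) + 1))
      = ∑ S ∈ s.powerset, W S f * W S x := by
    intro x
    rw [Finset.prod_add]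
    refine Finset.sum_congr rfl fun S _ => ?_
    rw [Finset.prod_const_one, mul_one]
    unfold W
    rw [← Finset.prod_mul_distrib]
    exact Finset.prod_congr rfl fun i _ => mul_comm _ _
  have hsum : ∑ x ∈ C, (∏ i ∈ s, ((-1:ℤ)^(x i : ℕ) * (-1)^(f i : ℕ) + 1))
      = ((C.filter (fun x => ∀ i ∈ s, x i = f i)).card : ℤ) * 2^t := by
    rw [Finset.sum_congr rfl fun x _ => claimA x, ← Finset.sum_filter,
      Finset.sum_const, nsmul_eq_mul]
  have hsum2 : ∑ x ∈ C, (∏ i ∈ s, ((-1:ℤ)^(x i : ℕ) * (-1)^(f i : ℕ) + 1))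
      = (C.card : ℤ) := by
    rw [Finset.sum_congr rfl fun x _ => claimB x, Finset.sum_comm]
    rw [Finset.sum_eq_single_of_mem (∅ : Finset (Fin n))
      (Finset.mem_powerset.mpr (Finset.empty_subset s)) ?_]
    · simp [W]
    · intro S hS hSne
      rw [← Finset.mul_sum, key S (Finset.nonempty_iff_ne_empty.mpr hSne)
        (by calc S.card ≤ s.card := Finset.card_le_card (Finset.mem_powerset.mp hS)
                _ = t := hs), mul_zero]
  have : ((C.filter (fun x => ∀ i ∈ s, x i = f i)).card : ℤ) * 2^t = (C.card : ℤ) := by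
    rw [← hsum, hsum2]
  exact_mod_cast this
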